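/- arXiv:2009.08434 — 2 statements merged into one kernel-verified Lean document; each statement's English description precedes it below -/
import Mathlib

section
/- Let V = [[A, B], [Bᵀ, C]] be a real symmetric positive semidefinite (2n+2m)×(2n+2m) matrix with V ≥ I, and let P be an orthogonal projection acting on the second block (size 2m). Then A − B·(PCP)⁺·Bᵀ ≥ I_{2n}, where (PCP)⁺ is the Moore–Penrose pseudo-inverse of PCP. -/
open Matrix

/-- The four Penrose conditions characterising the Moore–Penrose pseudo-inverse. -/
def IsMoorePenroseInv {m : ℕ} (C X : Matrix (Fin m) (Fin m) ℝ) : Prop :=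
  C * X * C = C ∧ X * C * X = X ∧ (C * X)ᵀ = C * X ∧ (X * C)ᵀ = X * C

lemma mp_unique {k : ℕ} (M X Y : Matrix (Fin k) (Fin k) ℝ)
    (hX : IsMoorePenroseInv M X) (hY : IsMoorePenroseInv M Y) : X = Y := by
  obtain ⟨x1, x2, x3, x4⟩ := hX
  obtain ⟨y1, y2, y3, y4⟩ := hY
  have e1 : X = X * M * Y := by
    calc X = X * (M * X) := by rw [← Matrix.mul_assoc]; exact x2.symm
    _ = X * (M * X)ᵀ := by rw [x3]
    _ = X * (Xᵀ * Mᵀ) := by rw [Matrix.transpose_mul]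
    _ = X * (Xᵀ * (M * Y * M)ᵀ) := by rw [y1]
    _ = X * (M * X)ᵀ * (M * Y)ᵀ := by
        simp only [Matrix.transpose_mul, Matrix.mul_assoc]
    _ = X * (M * X) * (M * Y) := by rw [x3, y3]
    _ = X * M * Y := by
        rw [← Matrix.mul_assoc, ← Matrix.mul_assoc, x2]
  have e2 : Y = X * M * Y := by
    calc Y = (Y * M) * Y := by rw [y2]
    _ = (Y * M)ᵀ * Y := by rw [y4]
    _ = Mᵀ * Yᵀ * Y := by rw [Matrix.transpose_mul]
    _ = (M * X * M)ᵀ * Yᵀ * Y := by rw [x1]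
    _ = (X * M)ᵀ * ((Y * M)ᵀ * Y) := by
        simp only [Matrix.transpose_mul, Matrix.mul_assoc]
    _ = (X * M) * ((Y * M) * Y) := by rw [x4, y4]
    _ = X * M * Y := by rw [y2, Matrix.mul_assoc]
  rw [e1, ← e2]

/-- If V = [[A, B], [Bᵀ, C]] is real symmetric positive semidefinite with V ≥ I and P
is an orthogonal projection on the second block, then A − B·(PCP)⁺·Bᵀ ≥ I. -/
theorem stmt9 {n m : ℕ}
    (A : Matrix (Fin (2 * n)) (Fin (2 * n)) ℝ)
    (B : Matrix (Fin (2 * n)) (Fin (2 * m)) ℝ)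
    (C : Matrix (Fin (2 * m)) (Fin (2 * m)) ℝ)
    (hA : Aᵀ = A) (hC : Cᵀ = C)
    (hV : (Matrix.fromBlocks A B Bᵀ C).PosSemidef)
    (hVI : (Matrix.fromBlocks A B Bᵀ C - 1).PosSemidef)
    (P : Matrix (Fin (2 * m)) (Fin (2 * m)) ℝ) (hP : Pᵀ = P) (hP2 : P * P = P)
    (X : Matrix (Fin (2 * m)) (Fin (2 * m)) ℝ) (hX : IsMoorePenroseInv (P * C * P) X) :
    (A - B * X * Bᵀ - 1).PosSemidef := by
  set M : Matrix (Fin (2 * m)) (Fin (2 * m)) ℝ := P * C * P with hM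
  have hMsym : Mᵀ = M := by
    simp only [hM, Matrix.transpose_mul, hP, hC, Matrix.mul_assoc]
  obtain ⟨x1, x2, x3, x4⟩ := hX
  have hXt : Xᵀ = X := by
    refine mp_unique M Xᵀ X ⟨?_, ?_, ?_, ?_⟩ ⟨x1, x2, x3, x4⟩
    · calc M * Xᵀ * M = (Mᵀ * X * Mᵀ)ᵀ := by
            simp only [Matrix.transpose_mul, Matrix.transpose_transpose, Matrix.mul_assoc]
      _ = M := by rw [hMsym, x1, hMsym]
    · calc Xᵀ * M * Xᵀ = (X * Mᵀ * X)ᵀ := by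
            simp only [Matrix.transpose_mul, Matrix.transpose_transpose, Matrix.mul_assoc]
      _ = Xᵀ := by rw [hMsym, x2]
    · calc (M * Xᵀ)ᵀ = X * Mᵀ := by simp [Matrix.transpose_mul]
      _ = X * M := by rw [hMsym]
      _ = (X * M)ᵀ := x4.symm
      _ = M * Xᵀ := by simp [Matrix.transpose_mul, hMsym]
    · calc (Xᵀ * M)ᵀ = Mᵀ * X := by simp [Matrix.transpose_mul]
      _ = M * X := by rw [hMsym]
      _ = (M * X)ᵀ := x3.symm
      _ = Xᵀ * M := by simp [Matrix.transpose_mul, hMsym]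
  have hMP : M * P = M := by rw [hM, Matrix.mul_assoc, hP2]
  have hPM : P * M = M := by rw [hM, ← Matrix.mul_assoc, ← Matrix.mul_assoc, hP2]
  have hXXM : X * X * M = X := by
    calc X * X * M = X * Xᵀ * Mᵀ := by rw [hXt, hMsym]
    _ = X * (M * X)ᵀ := by simp only [Matrix.transpose_mul, Matrix.mul_assoc]
    _ = X * (M * X) := by rw [x3]
    _ = X := by rw [← Matrix.mul_assoc, x2]
  have hMXX : M * X * X = X := by
    calc M * X * X = Mᵀ * Xᵀ * X := by rw [hXt, hMsym]
    _ = (X * M)ᵀ * X := by simp only [Matrix.transpose_mul]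
    _ = (X * M) * X := by rw [x4]
    _ = X := x2
  have hXP : X * P = X := by
    calc X * P = X * X * M * P := by rw [hXXM]
    _ = X * X * M := by simp only [Matrix.mul_assoc, hMP]
    _ = X := hXXM
  have hPX : P * X = X := by
    calc P * X = P * (M * X * X) := by rw [hMXX]
    _ = M * X * X := by simp only [← Matrix.mul_assoc, hPM]
    _ = X := hMXX
  have hXCX : X * C * X = X := by
    calc X * C * X = (X * P) * C * (P * X) := by rw [hXP, hPX]
    _ = X * M * X := by rw [hM]; simp only [Matrix.mul_assoc]
    _ = X := x2
  -- W := fromBlocks (A-1) B Bᵀ C is PSD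
  set D : Matrix (Fin (2 * n) ⊕ Fin (2 * m)) (Fin (2 * n) ⊕ Fin (2 * m)) ℝ :=
    fromBlocks 0 0 0 1 with hD
  have hDpsd : D.PosSemidef := by
    have := Matrix.posSemidef_conjTranspose_mul_self D
    have hDD : Dᴴ * D = D := by
      simp [hD, Matrix.conjTranspose, Matrix.fromBlocks_transpose, Matrix.fromBlocks_map,
        Matrix.fromBlocks_multiply]
    rwa [hDD] at this
  have hWeq : fromBlocks (A - 1) B Bᵀ C = (fromBlocks A B Bᵀ C - 1) + D := by
    rw [hD, ← Matrix.fromBlocks_one]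
    ext (i | i) (j | j) <;>
      simp [Matrix.fromBlocks, Matrix.sub_apply, Matrix.add_apply]
  have hW : (fromBlocks (A - 1) B Bᵀ C).PosSemidef := hWeq ▸ hVI.add hDpsd
  -- conjugate by R
  set R : Matrix (Fin (2 * n) ⊕ Fin (2 * m)) (Fin (2 * n) ⊕ Fin (2 * m)) ℝ :=
    fromBlocks 1 0 (-(X * Bᵀ)) 0 with hR
  have hconj := hW.conjTranspose_mul_mul_same R
  have hRH : Rᴴ = fromBlocks 1 (-(B * X)) 0 0 := by
    rw [Matrix.conjTranspose_eq_transpose_of_trivial, hR, Matrix.fromBlocks_transpose]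
    simp [Matrix.transpose_mul, hXt]
  have hkey : Rᴴ * (fromBlocks (A - 1) B Bᵀ C * R)
      = fromBlocks (A - B * X * Bᵀ - 1) 0 0 0 := by
    rw [hRH, hR]
    rw [Matrix.fromBlocks_multiply, Matrix.fromBlocks_multiply]
    simp only [Matrix.mul_one, Matrix.one_mul, Matrix.mul_zero, Matrix.zero_mul,
      Matrix.mul_neg, Matrix.neg_mul, add_zero, zero_add, neg_neg, neg_zero]
    congr 1
    have h1 : B * (X * (C * (X * Bᵀ))) = B * (X * Bᵀ) := by
      calc B * (X * (C * (X * Bᵀ))) = B * (X * C * X * Bᵀ) := by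
            simp only [Matrix.mul_assoc]
      _ = B * (X * Bᵀ) := by rw [hXCX]
    simp only [Matrix.mul_add, Matrix.mul_neg, Matrix.mul_assoc, h1]
    abel
  rw [← Matrix.mul_assoc] at hkey
  rw [hkey] at hconj
  have := hconj.submatrix (Sum.inl : Fin (2 * n) → Fin (2 * n) ⊕ Fin (2 * m))
  convert this using 1
  ext i j; rfl
end

section
/- Generalized Schur complement positivity: if M = [[A, B], [Bᵀ, C]] is a real symmetric positive semidefinite block matrix, then A − B·C⁺·Bᵀ is positive semidefinite, where C⁺ is the Moore–Penrose pseudo-inverse of C. -/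
open Matrix

lemma mp_symm {m : ℕ} {C Cp : Matrix (Fin m) (Fin m) ℝ} (hC : Cᵀ = C)
    (h : IsMoorePenroseInv C Cp) : Cpᵀ = Cp := by
  obtain ⟨h1, h2, h3, h4⟩ := h
  set Y := Cpᵀ with hY
  have hY1 : C * Y * C = C := by
    have := congrArg Matrix.transpose h1
    simpa [Matrix.transpose_mul, hC, Matrix.mul_assoc] using this
  have hY2 : Y * C * Y = Y := by
    have := congrArg Matrix.transpose h2
    simpa [Matrix.transpose_mul, hC, Matrix.mul_assoc] using this
  have hY3 : (C * Y)ᵀ = C * Y := by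
    have e1 : C * Y = Cp * C := by
      calc C * Y = Cᵀ * Cpᵀ := by rw [hC, hY]
        _ = (Cp * C)ᵀ := by rw [Matrix.transpose_mul]
        _ = Cp * C := h4
    rw [e1, h4]
  have hY4 : (Y * C)ᵀ = Y * C := by
    have e1 : Y * C = C * Cp := by
      calc Y * C = Cpᵀ * Cᵀ := by rw [hC, hY]
        _ = (C * Cp)ᵀ := by rw [Matrix.transpose_mul]
        _ = C * Cp := h3
    rw [e1, h3]
  have eX : Cp = Cp * C * Y := by
    calc Cp = Cp * C * Cp := h2.symm
      _ = Cp * (C * Cp)ᵀ := by rw [h3, Matrix.mul_assoc]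
      _ = Cp * (Cpᵀ * Cᵀ) := by rw [Matrix.transpose_mul]
      _ = Cp * (Cpᵀ * (C * Y * C)ᵀ) := by rw [hY1, hC]
      _ = Cp * (C * Cp)ᵀ * (C * Y)ᵀ := by
            simp [Matrix.transpose_mul, Matrix.mul_assoc, hC]
      _ = Cp * (C * Cp) * (C * Y) := by rw [h3, hY3]
      _ = (Cp * C * Cp) * (C * Y) := by simp [Matrix.mul_assoc]
      _ = Cp * C * Y := by rw [h2, Matrix.mul_assoc]
  have eY : Y = Cp * C * Y := by
    calc Y = Y * C * Y := hY2.symm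
      _ = (Y * C)ᵀ * Y := by rw [hY4]
      _ = Cᵀ * Yᵀ * Y := by rw [Matrix.transpose_mul]
      _ = (C * Cp * C)ᵀ * Yᵀ * Y := by rw [h1]
      _ = (Cp * C)ᵀ * ((Y * C)ᵀ * Y) := by
            simp [Matrix.transpose_mul, Matrix.mul_assoc, hC, hY]
      _ = Cp * C * (Y * C * Y) := by rw [h4, hY4, Matrix.mul_assoc]
      _ = Cp * C * Y := by rw [hY2]
  rw [hY] at eY ⊢
  rw [eY, ← eX]

/-- Generalized Schur complement positivity: if M = [[A, B], [Bᵀ, C]] is real symmetric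
positive semidefinite, then A − B·C⁺·Bᵀ is positive semidefinite. -/
theorem stmt11 {n m : ℕ} (A : Matrix (Fin n) (Fin n) ℝ) (B : Matrix (Fin n) (Fin m) ℝ)
    (C : Matrix (Fin m) (Fin m) ℝ) (hA : Aᵀ = A) (hC : Cᵀ = C)
    (hM : (Matrix.fromBlocks A B Bᵀ C).PosSemidef)
    (Cp : Matrix (Fin m) (Fin m) ℝ) (hCp : IsMoorePenroseInv C Cp) :
    (A - B * Cp * Bᵀ).PosSemidef := by
  have hCpS : Cpᵀ = Cp := mp_symm hC hCp
  obtain ⟨h1, h2, h3, h4⟩ := hCp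
  set U : Matrix (Fin n ⊕ Fin m) (Fin n ⊕ Fin m) ℝ :=
    Matrix.fromBlocks 1 0 (-(Cp * Bᵀ)) 1 with hU
  have hN : (Uᴴ * Matrix.fromBlocks A B Bᵀ C * U).PosSemidef :=
    hM.conjTranspose_mul_mul_same U
  have hUT : Uᴴ = Matrix.fromBlocks 1 (-(B * Cp)) 0 1 := by
    have : Uᴴ = Uᵀ := by
      ext i j; simp [Matrix.conjTranspose_apply, Matrix.transpose_apply]
    rw [this, hU, Matrix.fromBlocks_transpose]
    simp [Matrix.transpose_mul, hCpS]
  have hkey : B * (Cp * (C * (Cp * Bᵀ))) = B * (Cp * Bᵀ) := by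
    have : Cp * (C * (Cp * Bᵀ)) = Cp * Bᵀ := by
      rw [← Matrix.mul_assoc, ← Matrix.mul_assoc, h2]
    rw [this]
  have key : Uᴴ * Matrix.fromBlocks A B Bᵀ C * U =
      Matrix.fromBlocks (A - B * Cp * Bᵀ) (B - B * Cp * C) (Bᵀ - C * Cp * Bᵀ) C := by
    rw [hUT]
    rw [Matrix.fromBlocks_multiply, Matrix.fromBlocks_multiply]
    simp only [Matrix.one_mul, Matrix.mul_one, Matrix.mul_zero, Matrix.zero_mul,
      add_zero, zero_add, Matrix.neg_mul, Matrix.mul_neg, Matrix.add_mul,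
      Matrix.mul_add, Matrix.mul_assoc, hkey]
    abel
  rw [key] at hN
  have := hN.submatrix Sum.inl
  have hsub : (Matrix.fromBlocks (A - B * Cp * Bᵀ) (B - B * Cp * C) (Bᵀ - C * Cp * Bᵀ)
      C).submatrix Sum.inl Sum.inl = A - B * Cp * Bᵀ := rfl
  rwa [hsub] at this
end
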